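/- Let H be a Q-graded Hopf quasigroup. Then the antipode is anti-multiplicative: S_{pq}(hg) = S_q(g)S_p(h) for all p,q in Q, h in H_p, g in H_q. -/

import Mathlib

open TensorProduct

universe u v w

/-- A quasigroup: a set with product, identity `e`, and two-sided inverses satisfying
`p⁻¹(pq) = q` and `(qp)p⁻¹ = q`. -/
structure QuasigroupStruct (Q : Type u) where
  mul : Q → Q → Q
  one : Q
  inv : Q → Q
  mul_one : ∀ p, mul p one = p
  one_mul : ∀ p, mul one p = p
  inv_mul_cancel : ∀ p q, mul (inv p) (mul p q) = q
  mul_inv_cancel : ∀ p q, mul (mul q p) (inv p) = q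

namespace QuasigroupStruct

variable {Q : Type u} (G : QuasigroupStruct Q)

lemma inv_mul_self (p : Q) : G.mul (G.inv p) p = G.one := by
  have h := G.inv_mul_cancel p G.one
  rwa [G.mul_one] at h

lemma mul_inv_self (p : Q) : G.mul p (G.inv p) = G.one := by
  have h := G.mul_inv_cancel p G.one
  rwa [G.one_mul] at h

lemma inv_inv (p : Q) : G.inv (G.inv p) = p := by
  have h := G.inv_mul_cancel (G.inv p) p
  rw [G.inv_mul_self p] at h
  rwa [G.mul_one] at h

lemma mul_inv_cancel_left (p q : Q) : G.mul p (G.mul (G.inv p) q) = q := by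
  have h := G.inv_mul_cancel (G.inv p) q
  rwa [G.inv_inv] at h

lemma inv_mul_cancel_right (p q : Q) : G.mul (G.mul q (G.inv p)) p = q := by
  have h := G.mul_inv_cancel (G.inv p) q
  rwa [G.inv_inv] at h

lemma mul_inv_rev (p q : Q) : G.inv (G.mul p q) = G.mul (G.inv q) (G.inv p) := by
  have h1 : G.mul q (G.inv (G.mul p q)) = G.inv p := by
    have h := G.mul_inv_cancel (G.mul p q) (G.inv p)
    rwa [G.inv_mul_cancel p q] at h
  calc G.inv (G.mul p q)
      = G.mul (G.inv q) (G.mul q (G.inv (G.mul p q))) := (G.inv_mul_cancel q _).symm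
    _ = G.mul (G.inv q) (G.inv p) := by rw [h1]

lemma inv_one : G.inv G.one = G.one := by
  have h := G.inv_mul_cancel G.one G.one
  rwa [G.one_mul, G.mul_one] at h

end QuasigroupStruct

/-- Transport along an equality of grades, as a linear map. -/
def gcl {Q : Type u} {H : Q → Type w} {k : Type v} [CommSemiring k]
    [∀ p, AddCommMonoid (H p)] [∀ p, Module k (H p)] {p q : Q} (e : p = q) :
    H p →ₗ[k] H q := by subst e; exact LinearMap.id

/-- A `Q`-graded Hopf quasigroup: a family of coassociative counital coalgebras `H p`
with a (not necessarily associative) graded multiplication, unit and antipode family,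
such that the multiplications and the unit are coalgebra maps and the antipode
satisfies the Hopf quasigroup axioms. -/
structure GradedHopfQuasigroup (k : Type v) [CommRing k] {Q : Type u} (G : QuasigroupStruct Q)
    (H : Q → Type w) [∀ p, AddCommGroup (H p)] [∀ p, Module k (H p)]
    [∀ p, Coalgebra k (H p)] where
  mul : ∀ p q, H p →ₗ[k] H q →ₗ[k] H (G.mul p q)
  one : H G.one
  antipode : ∀ p, H p →ₗ[k] H (G.inv p)
  mul_one' : ∀ (p : Q) (h : H p), gcl (k := k) (G.mul_one p) ((mul p G.one h) one) = h
  one_mul' : ∀ (p : Q) (h : H p), gcl (k := k) (G.one_mul p) ((mul G.one p one) h) = h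
  comul_mul : ∀ (p q : Q) (h : H p) (g : H q),
    Coalgebra.comul (R := k) ((mul p q h) g) =
      (TensorProduct.map (TensorProduct.lift (mul p q)) (TensorProduct.lift (mul p q)))
        ((TensorProduct.tensorTensorTensorComm k (H p) (H p) (H q) (H q))
          (Coalgebra.comul h ⊗ₜ[k] Coalgebra.comul g))
  counit_mul : ∀ (p q : Q) (h : H p) (g : H q),
    Coalgebra.counit (R := k) ((mul p q h) g) =
      Coalgebra.counit (R := k) h * Coalgebra.counit (R := k) g
  comul_one : Coalgebra.comul (R := k) one = one ⊗ₜ[k] one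
  counit_one : Coalgebra.counit (R := k) one = 1
  /-- `S (h₁) (h₂ g) = ε(h) g` -/
  antipode_mul_left : ∀ (p q : Q) (h : H p) (g : H q),
    TensorProduct.lift
      (((mul (G.inv p) (G.mul p q)).comp (antipode p)).compl₂ ((mul p q).flip g))
      (Coalgebra.comul h)
      = gcl (k := k) (G.inv_mul_cancel p q).symm (Coalgebra.counit (R := k) h • g)
  /-- `h₁ (S (h₂) g) = ε(h) g` -/
  antipode_mul_left' : ∀ (p q : Q) (h : H p) (g : H q),
    TensorProduct.lift
      ((mul p (G.mul (G.inv p) q)).compl₂ (((mul (G.inv p) q).flip g).comp (antipode p)))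
      (Coalgebra.comul h)
      = gcl (k := k) (G.mul_inv_cancel_left p q).symm (Coalgebra.counit (R := k) h • g)
  /-- `(g S (h₁)) h₂ = ε(h) g` -/
  antipode_mul_right : ∀ (p q : Q) (h : H p) (g : H q),
    TensorProduct.lift
      ((mul (G.mul q (G.inv p)) p).comp ((mul q (G.inv p) g).comp (antipode p)))
      (Coalgebra.comul h)
      = gcl (k := k) (G.inv_mul_cancel_right p q).symm (Coalgebra.counit (R := k) h • g)
  /-- `(g h₁) S (h₂) = ε(h) g` -/
  antipode_mul_right' : ∀ (p q : Q) (h : H p) (g : H q),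
    TensorProduct.lift
      (((mul (G.mul q p) (G.inv p)).comp (mul q p g)).compl₂ (antipode p))
      (Coalgebra.comul h)
      = gcl (k := k) (G.mul_inv_cancel p q).symm (Coalgebra.counit (R := k) h • g)

variable {k : Type v} [Field k] {Q : Type u} {G : QuasigroupStruct Q}
  {H : Q → Type w} [∀ p, AddCommGroup (H p)] [∀ p, Module k (H p)]
  [∀ p, Coalgebra k (H p)]

/-!
In Sweedler notation both sides equal `∑ (S(h₁g₁)((h₂g₂)S(g₃)))S(h₃)`. Contracting first
`(h₂g₂)S(g₃)` and then `(S(h₁g)h₂)S(h₃)` with the axiom `(xh₁)S(h₂) = ε(h)x` gives `S(hg)`.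
Since the comultiplication is multiplicative, `∑ S(h₁g₁)((h₂g₂)z)` is an instance of the axiom
`S(m₁)(m₂z) = ε(m)z` for `m = hg`, and contracting it gives `S(g)S(h)`. Coassociativity regroups
the Sweedler indices between these steps.
-/

namespace Coalgebra

variable {R M N X : Type*} [CommSemiring R] [AddCommMonoid M] [Module R M] [Coalgebra R M]
  [AddCommMonoid N] [Module R N] [Coalgebra R N] [AddCommMonoid X] [Module R X]
  {a : M} {ι κ Λ : Type*}

lemma sum_counit_right_smul (𝓡 : Repr R a ι) :
    ∑ i ∈ 𝓡.index, counit (R := R) (𝓡.right i) • 𝓡.left i = a := by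
  simpa only [map_sum, TensorProduct.rid_tmul, one_smul] using
    congr(TensorProduct.rid R R M $(sum_tmul_counit_eq (R := R) 𝓡))

lemma sum_sum_counit_mul_smul (B : M →ₗ[R] N →ₗ[R] X) {b : N} (𝓡 : Repr R a ι)
    (𝓢 : Repr R b κ) :
    ∑ i ∈ 𝓡.index, ∑ j ∈ 𝓢.index,
      (counit (R := R) (𝓡.left i) * counit (R := R) (𝓢.left j)) • B (𝓡.right i) (𝓢.right j)
      = B a b := by
  conv_rhs => rw [← sum_counit_smul 𝓡, ← sum_counit_smul 𝓢]
  simp only [map_sum, map_smul, LinearMap.sum_apply, LinearMap.smul_apply, Finset.smul_sum,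
    mul_smul]
  rw [Finset.sum_comm]
  exact Finset.sum_congr rfl fun _ _ => Finset.sum_congr rfl fun _ _ => smul_comm _ _ _

lemma sum_sum_apply_coassoc (𝓡 : Repr R a ι) (𝓡₁ : ∀ i, Repr R (𝓡.left i) κ)
    (𝓡₂ : ∀ i, Repr R (𝓡.right i) Λ) (Φ : M →ₗ[R] M →ₗ[R] M →ₗ[R] X) :
    ∑ i ∈ 𝓡.index, ∑ j ∈ (𝓡₁ i).index, Φ ((𝓡₁ i).left j) ((𝓡₁ i).right j) (𝓡.right i)
      = ∑ i ∈ 𝓡.index, ∑ j ∈ (𝓡₂ i).index, Φ (𝓡.left i) ((𝓡₂ i).left j) ((𝓡₂ i).right j) := by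
  simpa only [map_sum, TensorProduct.lift.tmul, LinearMap.comp_apply,
    TensorProduct.uncurry_apply] using
    congr(TensorProduct.lift (TensorProduct.uncurry (.id R) M M X ∘ₗ Φ)
      $(sum_tmul_tmul_eq 𝓡 𝓡₁ 𝓡₂))

end Coalgebra

section Transport

variable {R : Type*} [CommSemiring R] [∀ p, Module R (H p)] {a b c : Q}

@[simp]
lemma gcl_gcl (e : a = b) (f : b = c) (x : H a) :
    gcl (k := R) f (gcl (k := R) e x) = gcl (k := R) (e.trans f) x := by
  subst e f; rfl

@[simp]
lemma gcl_self (e : a = a) (x : H a) : gcl (k := R) e x = x := rfl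

lemma eq_gcl_of_gcl_eq_gcl {e₁ : a = c} {e₂ : b = c} {x : H a} {y : H b}
    (hxy : gcl (k := R) e₁ x = gcl (k := R) e₂ y) (e : b = a) : x = gcl (k := R) e y := by
  subst e e₁; exact hxy

end Transport

namespace GradedHopfQuasigroup

open Coalgebra

variable {R : Type*} [CommRing R] [∀ p, Module R (H p)] [∀ p, Coalgebra R (H p)]
  (A : GradedHopfQuasigroup R G H) {a b c : Q} {ι κ : Type*}

local notation:70 x:70 " ⋆ " y:71 => A.mul _ _ x y
local notation "𝒮" => A.antipode _

lemma mul_gcl_left (e : a = c) (x : H a) (y : H b) :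
    gcl (k := R) e x ⋆ y = gcl (k := R) (congrArg (G.mul · b) e) (x ⋆ y) := by
  subst e; rfl

lemma mul_gcl_right (e : b = c) (x : H a) (y : H b) :
    x ⋆ gcl (k := R) e y = gcl (k := R) (congrArg (G.mul a) e) (x ⋆ y) := by
  subst e; rfl

lemma sum_antipode_mul_mul (x : H a) (y : H b) (𝓡 : Repr R x ι) :
    ∑ i ∈ 𝓡.index, 𝒮 (𝓡.left i) ⋆ (𝓡.right i ⋆ y)
      = gcl (k := R) (G.inv_mul_cancel a b).symm (counit (R := R) x • y) := by
  simpa only [← 𝓡.eq, map_sum, TensorProduct.lift.tmul, LinearMap.compl₂_apply,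
    LinearMap.comp_apply, LinearMap.flip_apply] using A.antipode_mul_left a b x y

lemma sum_mul_mul_antipode (x : H a) (y : H b) (𝓡 : Repr R x ι) :
    ∑ i ∈ 𝓡.index, (y ⋆ 𝓡.left i) ⋆ 𝒮 (𝓡.right i)
      = gcl (k := R) (G.mul_inv_cancel a b).symm (counit (R := R) x • y) := by
  simpa only [← 𝓡.eq, map_sum, TensorProduct.lift.tmul, LinearMap.compl₂_apply,
    LinearMap.comp_apply, LinearMap.flip_apply] using A.antipode_mul_right' a b x y

noncomputable def reprMul {x : H a} {y : H b} (𝓡 : Repr R x ι) (𝓢 : Repr R y κ) :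
    Repr R (x ⋆ y) (ι × κ) where
  index := 𝓡.index ×ˢ 𝓢.index
  left i := 𝓡.left i.1 ⋆ 𝓢.left i.2
  right i := 𝓡.right i.1 ⋆ 𝓢.right i.2
  eq := by
    rw [A.comul_mul, ← 𝓡.eq, ← 𝓢.eq, Finset.sum_product]
    simp only [TensorProduct.sum_tmul, TensorProduct.tmul_sum, map_sum,
      TensorProduct.tensorTensorTensorComm_tmul, TensorProduct.map_tmul, TensorProduct.lift.tmul]
    exact Finset.sum_comm

lemma sum_sum_antipode_mul_mul_mul {x : H a} {y : H b} (z : H c) (𝓡 : Repr R x ι)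
    (𝓢 : Repr R y κ) :
    ∑ i ∈ 𝓡.index, ∑ j ∈ 𝓢.index,
      𝒮 (𝓡.left i ⋆ 𝓢.left j) ⋆ ((𝓡.right i ⋆ 𝓢.right j) ⋆ z)
      = gcl (k := R) (G.inv_mul_cancel _ c).symm
          ((counit (R := R) x * counit (R := R) y) • z) := by
  rw [← Finset.sum_product', ← A.counit_mul]
  exact A.sum_antipode_mul_mul (x ⋆ y) z (A.reprMul 𝓡 𝓢)

lemma sum_sum_map_mul_mul_antipode (f : H a →ₗ[R] H c) (x : H a) (𝓡 : Repr R x ι)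
    (𝓡₂ : ∀ i, Repr R (𝓡.right i) κ) :
    ∑ i ∈ 𝓡.index, ∑ j ∈ (𝓡₂ i).index, (f (𝓡.left i) ⋆ (𝓡₂ i).left j) ⋆ 𝒮 ((𝓡₂ i).right j)
      = gcl (k := R) (G.mul_inv_cancel a c).symm (f x) := by
  simp only [sum_mul_mul_antipode, ← map_sum, ← map_smul, sum_counit_right_smul]

lemma sum_sum_apply_gcl_mul_mul_antipode {X : Type*} [AddCommGroup X] [Module R X]
    (F : H b →ₗ[R] H a →ₗ[R] X) (x : H a) (y : H b) (𝓡 : Repr R y ι)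
    (𝓡₂ : ∀ i, Repr R (𝓡.right i) κ) :
    ∑ i ∈ 𝓡.index, ∑ j ∈ (𝓡₂ i).index,
      F (𝓡.left i) (gcl (k := R) (G.mul_inv_cancel b a) ((x ⋆ (𝓡₂ i).left j) ⋆ 𝒮 ((𝓡₂ i).right j)))
      = F y x := by
  simp only [← map_sum, sum_mul_mul_antipode, gcl_gcl, gcl_self, map_smul]
  conv_rhs => rw [← sum_counit_right_smul 𝓡]
  simp only [map_sum, map_smul, LinearMap.sum_apply, LinearMap.smul_apply]

lemma gcl_antipode_mul_eq_sum_sum (x : H a) (y : H b) (𝓡 : Repr R x ι)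
    (𝓡₁ : ∀ i, Repr R (𝓡.left i) κ) :
    gcl (k := R) (G.mul_inv_cancel a (G.inv (G.mul a b))).symm (𝒮 (x ⋆ y))
      = ∑ i ∈ 𝓡.index, ∑ j ∈ (𝓡₁ i).index,
          (𝒮 ((𝓡₁ i).left j ⋆ y) ⋆ (𝓡₁ i).right j) ⋆ 𝒮 (𝓡.right i) := by
  let 𝓡₂ i := ℛ R (𝓡.right i)
  calc gcl (k := R) (G.mul_inv_cancel a (G.inv (G.mul a b))).symm (𝒮 (x ⋆ y))
      = ∑ i ∈ 𝓡.index, ∑ j ∈ (𝓡₂ i).index,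
          (𝒮 (𝓡.left i ⋆ y) ⋆ (𝓡₂ i).left j) ⋆ 𝒮 ((𝓡₂ i).right j) :=
        (A.sum_sum_map_mul_mul_antipode (A.antipode _ ∘ₗ (A.mul a b).flip y) x 𝓡 𝓡₂).symm
    _ = _ := (sum_sum_apply_coassoc 𝓡 𝓡₁ 𝓡₂
        (((A.mul _ a).comp (A.antipode _ ∘ₗ (A.mul a b).flip y)).compr₂
          ((A.mul _ _).compl₂ (A.antipode a)))).symm

lemma antipode_mul_mul_mul_antipode_eq_sum_sum (x₁ x₂ x₃ : H a) (y : H b) (𝓡 : Repr R y ι)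
    (𝓡₁ : ∀ i, Repr R (𝓡.left i) κ) :
    (𝒮 (x₁ ⋆ y) ⋆ x₂) ⋆ 𝒮 x₃
      = ∑ i ∈ 𝓡.index, ∑ j ∈ (𝓡₁ i).index,
          (𝒮 (x₁ ⋆ (𝓡₁ i).left j)
            ⋆ gcl (k := R) (G.mul_inv_cancel b a) ((x₂ ⋆ (𝓡₁ i).right j) ⋆ 𝒮 (𝓡.right i)))
            ⋆ 𝒮 x₃ := by
  let 𝓡₂ i := ℛ R (𝓡.right i)
  let F := ((A.mul _ a).comp (A.antipode _ ∘ₗ A.mul a b x₁)).compr₂ ((A.mul _ _).flip (𝒮 x₃))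
  let W := (((A.mul _ _).compl₂ (A.antipode b)).comp (A.mul a b x₂)).compr₂
    (gcl (k := R) (G.mul_inv_cancel b a))
  calc (𝒮 (x₁ ⋆ y) ⋆ x₂) ⋆ 𝒮 x₃
      = ∑ i ∈ 𝓡.index, ∑ j ∈ (𝓡₂ i).index,
          (𝒮 (x₁ ⋆ 𝓡.left i)
            ⋆ gcl (k := R) (G.mul_inv_cancel b a) ((x₂ ⋆ (𝓡₂ i).left j) ⋆ 𝒮 ((𝓡₂ i).right j)))
            ⋆ 𝒮 x₃ :=
        (A.sum_sum_apply_gcl_mul_mul_antipode F x₂ y 𝓡 𝓡₂).symm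
    _ = _ := (sum_sum_apply_coassoc 𝓡 𝓡₁ 𝓡₂ (((LinearMap.llcomp R _ _ _).comp F).compl₂ W)).symm

lemma sum_sum_antipode_mul_gcl_mul_mul_mul {x : H a} {y : H b} (z : H (G.inv b)) (w : H c)
    (𝓡 : Repr R x ι) (𝓢 : Repr R y κ) :
    ∑ i ∈ 𝓡.index, ∑ j ∈ 𝓢.index,
      (𝒮 (𝓡.left i ⋆ 𝓢.left j) ⋆ gcl (k := R) (G.mul_inv_cancel b a) ((𝓡.right i ⋆ 𝓢.right j) ⋆ z))
        ⋆ w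
      = gcl (k := R) (by rw [← G.inv_mul_cancel (G.mul a b) (G.inv b), G.mul_inv_cancel])
          ((counit (R := R) x * counit (R := R) y) • (z ⋆ w)) := by
  calc _ = gcl (k := R) (by rw [G.mul_inv_cancel])
        ((∑ i ∈ 𝓡.index, ∑ j ∈ 𝓢.index, 𝒮 (𝓡.left i ⋆ 𝓢.left j) ⋆ ((𝓡.right i ⋆ 𝓢.right j) ⋆ z))
          ⋆ w) := by
        simp only [mul_gcl_right, mul_gcl_left, map_sum, LinearMap.sum_apply]
    _ = _ := by
        rw [sum_sum_antipode_mul_mul_mul, mul_gcl_left, gcl_gcl, map_smul, LinearMap.smul_apply]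

end GradedHopfQuasigroup

theorem gradedHopfQuasigroup_antipode_mul (A : GradedHopfQuasigroup k G H)
    (p q : Q) (h : H p) (g : H q) :
    A.antipode (G.mul p q) ((A.mul p q h) g)
      = gcl (k := k) (G.mul_inv_rev p q).symm
          ((A.mul (G.inv q) (G.inv p) (A.antipode q g)) (A.antipode p h)) := by
  let 𝓡 := Coalgebra.Repr.arbitrary k h
  let 𝓢 := Coalgebra.Repr.arbitrary k g
  have key := A.gcl_antipode_mul_eq_sum_sum h g 𝓡 fun i => Coalgebra.Repr.arbitrary k (𝓡.left i)
  simp only [A.antipode_mul_mul_mul_antipode_eq_sum_sum _ _ _ g 𝓢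
    fun i => Coalgebra.Repr.arbitrary k (𝓢.left i)] at key
  conv at key => rhs; enter [2, i]; rw [Finset.sum_comm]
  simp only [A.sum_sum_antipode_mul_gcl_mul_mul_mul, ← map_sum] at key
  have counit_sum := Coalgebra.sum_sum_counit_mul_smul
    (((A.mul _ _).flip.comp (A.antipode p)).compl₂ (A.antipode q)) 𝓡 𝓢
  simp only [LinearMap.compl₂_apply, LinearMap.comp_apply, LinearMap.flip_apply] at counit_sum
  rw [counit_sum] at key
  exact eq_gcl_of_gcl_eq_gcl key _
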